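/- For n ≥ 2 there exists a constant C₀ > 0 such that the function φ(x) = ∫_{S^{n-1}} e^{x·ω} dω satisfies 0 < φ(x) ≤ C₀ (1+|x|)^{-(n-1)/2} e^{|x|} for all x ∈ ℝⁿ. -/

import Mathlib

/-!
Since `|⟪x, ω⟫| ≤ ‖x‖` on the unit sphere, `φ x` lies between `A e^{-‖x‖}` and `A e^{‖x‖}`,
where `A` is the area of the sphere; this gives positivity and the bound for `‖x‖ ≤ 1`.
For large `‖x‖` write `e^{⟪x, ω⟫} = e^{‖x‖} e^{-s ω}` with `s ω = ‖x‖ - ⟪x, ω⟫ ≥ 0` and cut the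
sphere into the bands `k ≤ s < k + 1`. Such a band lies in the cap
`‖ω - x / ‖x‖‖² ≤ 2 (k + 1) / ‖x‖`, and the cone over a cap of radius `ρ` fits in a box with one
side `2` and `d - 1` sides `2ρ` in an orthonormal frame containing `x / ‖x‖`. The band therefore
has measure `O(((k + 1) / ‖x‖) ^ ((d - 1) / 2))`, and summing against `e^{-k}` gives
`φ x = O(‖x‖ ^ (-(d - 1) / 2) e^{‖x‖})`.
-/

open MeasureTheory Metric Real Module Set
open scoped Pointwise RealInnerProductSpace

theorem summable_exp_neg_mul_succ_pow (m : ℕ) :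
    Summable fun k : ℕ ↦ exp (-k) * ((k : ℝ) + 1) ^ m := by
  refine (((summable_nat_add_iff 1).2 (summable_pow_mul_exp_neg_nat_mul m one_pos)).mul_left
    (exp 1)).congr fun k ↦ ?_
  rw [mul_left_comm, ← exp_add]
  push_cast
  ring_nf

theorem sqrt_div_pow_le {a r : ℝ} (ha : 1 ≤ a) (hr : 0 < r) (m : ℕ) :
    √(a / r) ^ m ≤ a ^ m * r ^ (-(m : ℝ) / 2) := by
  have hsqrt_r : √r ^ m = r ^ ((m : ℝ) / 2) := by
    rw [sqrt_eq_rpow, ← rpow_natCast, ← rpow_mul hr.le]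
    ring_nf
  rw [sqrt_div' _ hr.le, div_pow, hsqrt_r, neg_div, rpow_neg hr.le, div_eq_mul_inv]
  gcongr
  exact sqrt_le_self_iff.2 (.inr ha)

theorem max_one_rpow_neg_le {p r : ℝ} (hp : 0 ≤ p) (hr : 0 ≤ r) :
    max 1 r ^ (-p) ≤ 2 ^ p * (1 + r) ^ (-p) := by
  have h1r : (1 + r) ^ p ≤ 2 ^ p * max 1 r ^ p := by
    rw [← mul_rpow zero_le_two (by positivity)]
    gcongr
    linarith [le_max_left 1 r, le_max_right 1 r]
  rw [rpow_neg (by positivity), rpow_neg (by positivity), ← div_eq_mul_inv,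
    inv_le_iff_one_le_mul₀' (by positivity), mul_div_assoc', le_div_iff₀ (by positivity)]
  linarith

theorem integral_exp_neg_le_tsum {X : Type*} [MeasurableSpace X] {μ : Measure X}
    [IsFiniteMeasure μ] {s : X → ℝ} (hs : Measurable s) (hs0 : ∀ x, 0 ≤ s x) {a : ℕ → ℝ}
    (ha : ∀ k : ℕ, μ.real {x | s x < k + 1} ≤ a k) (hsum : Summable fun k : ℕ ↦ exp (-k) * a k) :
    ∫ x, exp (-s x) ∂μ ≤ ∑' k : ℕ, exp (-k) * a k := by
  set A : ℕ → Set X := fun k ↦ (fun x ↦ ⌊s x⌋₊) ⁻¹' {k}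
  have hA : ∀ k, MeasurableSet (A k) := fun k ↦
    (Nat.measurable_floor.comp hs) (measurableSet_singleton k)
  have hint : Integrable (fun x ↦ exp (-s x)) μ :=
    .of_bound (by fun_prop) 1 (.of_forall fun x ↦ by simpa using hs0 x)
  have hbands : HasSum (fun k ↦ ∫ x in A k, exp (-s x) ∂μ) (∫ x, exp (-s x) ∂μ) := by
    have := hasSum_integral_iUnion hA (pairwise_disjoint_fiber _) hint.integrableOn
    rwa [← preimage_iUnion, iUnion_of_singleton, preimage_univ, Measure.restrict_univ] at this
  refine hasSum_le (fun k ↦ ?_) hbands hsum.hasSum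
  calc ∫ x in A k, exp (-s x) ∂μ ≤ ∫ x in A k, exp (-k) ∂μ := by
        refine setIntegral_mono_on hint.integrableOn (integrableOn_const (by simp)) (hA k)
          fun x hx ↦ exp_le_exp.2 (neg_le_neg ?_)
        exact (congrArg Nat.cast hx.symm).le.trans (Nat.floor_le (hs0 x))
    _ = exp (-k) * μ.real (A k) := by rw [setIntegral_const, smul_eq_mul, mul_comm]
    _ ≤ exp (-k) * a k := by
        refine mul_le_mul_of_nonneg_left ((measureReal_mono fun x hx ↦ ?_).trans (ha k))
          (exp_pos _).le
        exact (Nat.lt_floor_add_one (s x)).trans_eq (by rw [show ⌊s x⌋₊ = k from hx])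

theorem EuclideanSpace.volume_setOf_forall_abs_le {ι : Type*} [Fintype ι] (c : ι → ℝ) :
    volume {y : EuclideanSpace ℝ ι | ∀ i, |y i| ≤ c i} = ∏ i, ENNReal.ofReal (2 * c i) := by
  have hbox : {y : EuclideanSpace ℝ ι | ∀ i, |y i| ≤ c i}
      = (MeasurableEquiv.toLp 2 (ι → ℝ)).symm ⁻¹' pi univ fun i ↦ Icc (-c i) (c i) := by
    ext y
    simp only [mem_ofPred_eq, mem_preimage, mem_univ_pi, mem_Icc, abs_le]
    rfl
  rw [hbox, (EuclideanSpace.volume_preserving_symm_measurableEquiv_toLp ι).measure_preimage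
    (MeasurableSet.univ_pi fun _ ↦ measurableSet_Icc).nullMeasurableSet, volume_pi_pi]
  simp_rw [Real.volume_Icc, sub_neg_eq_add, two_mul]

section InnerProductSpace

variable {E : Type*} [NormedAddCommGroup E] [InnerProductSpace ℝ E]

theorem OrthonormalBasis.abs_repr_le_of_norm_sub_le {ι : Type*} [Fintype ι] [DecidableEq ι]
    (b : OrthonormalBasis ι ℝ E) {i₀ : ι} {ω : E} (hω : ‖ω‖ = 1) {ρ : ℝ}
    (hωρ : ‖ω - b i₀‖ ≤ ρ) (i : ι) : |b.repr ω i| ≤ if i = i₀ then 1 else ρ := by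
  rw [b.repr_apply_apply]
  split_ifs with hi
  · simpa [hω, b.orthonormal.1 i] using abs_real_inner_le_norm (b i) ω
  · rw [← sub_zero ⟪b i, ω⟫, ← b.inner_eq_zero hi, ← inner_sub_right]
    exact (abs_real_inner_le_norm _ _).trans (by rwa [b.orthonormal.1 i, one_mul])

theorem inner_le_norm_of_mem_sphere (x : E) (ω : sphere (0 : E) 1) : ⟪x, (ω : E)⟫ ≤ ‖x‖ := by
  simpa using real_inner_le_norm x ω

variable [FiniteDimensional ℝ E]

theorem exists_orthonormalBasis_apply_eq {ι : Type*} [Fintype ι]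
    (hι : finrank ℝ E = Fintype.card ι) (i₀ : ι) {v : E} (hv : ‖v‖ = 1) :
    ∃ b : OrthonormalBasis ι ℝ E, b i₀ = v := by
  have hvo : Orthonormal ℝ (({i₀} : Set ι).domRestrict fun _ ↦ v) := by
    rw [orthonormal_iff_ite]
    rintro ⟨i, rfl⟩ ⟨j, rfl⟩
    simp [Set.domRestrict, hv]
  obtain ⟨b, hb⟩ := hvo.exists_orthonormalBasis_extension_of_card_eq hι
  exact ⟨b, hb i₀ rfl⟩

variable [MeasurableSpace E] [BorelSpace E]

theorem OrthonormalBasis.volume_setOf_forall_abs_repr_le {ι : Type*} [Fintype ι]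
    (b : OrthonormalBasis ι ℝ E) (c : ι → ℝ) :
    volume {y : E | ∀ i, |b.repr y i| ≤ c i} = ∏ i, ENNReal.ofReal (2 * c i) := by
  have hmeas : MeasurableSet {y : EuclideanSpace ℝ ι | ∀ i, |y i| ≤ c i} := by
    simp only [ofPred_forall]
    exact .iInter fun i ↦ measurableSet_le (by fun_prop) measurable_const
  rw [← EuclideanSpace.volume_setOf_forall_abs_le c,
    ← b.measurePreserving_repr.measure_preimage hmeas.nullMeasurableSet]
  rfl

theorem toSphere_real_setOf_norm_sub_le {v : E} (hv : ‖v‖ = 1) {ρ : ℝ} (hρ : 0 ≤ ρ) :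
    (volume : Measure E).toSphere.real {ω | ‖(ω : E) - v‖ ≤ ρ}
      ≤ finrank ℝ E * 2 ^ finrank ℝ E * ρ ^ (finrank ℝ E - 1) := by
  set d := finrank ℝ E
  have hd : 0 < d := by
    have : Nontrivial E := nontrivial_of_ne v 0 (by simp [← norm_ne_zero_iff, hv])
    exact finrank_pos
  set i₀ : Fin d := ⟨0, hd⟩
  obtain ⟨b, hb⟩ := exists_orthonormalBasis_apply_eq (by simp [d]) i₀ hv
  set c : Fin d → ℝ := fun i ↦ if i = i₀ then 1 else ρ
  have hcap : MeasurableSet {ω : sphere (0 : E) 1 | ‖(ω : E) - v‖ ≤ ρ} :=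
    (isClosed_le (by fun_prop) continuous_const).measurableSet
  have hcone : Ioo (0 : ℝ) 1 • ((↑) '' {ω : sphere (0 : E) 1 | ‖(ω : E) - v‖ ≤ ρ})
      ⊆ {y | ∀ i, |b.repr y i| ≤ c i} := by
    rintro _ ⟨t, ⟨ht0, ht1⟩, _, ⟨ω, hω, rfl⟩, rfl⟩ i
    rw [map_smul, PiLp.smul_apply, smul_eq_mul, abs_mul, abs_of_pos ht0]
    exact (mul_le_of_le_one_left (abs_nonneg _) ht1.le).trans
      (b.abs_repr_le_of_norm_sub_le (norm_eq_of_mem_sphere ω) (hb ▸ hω) i)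
  have hbox : ∏ i, ENNReal.ofReal (2 * c i) = ENNReal.ofReal (2 ^ d * ρ ^ (d - 1)) := by
    rw [← ENNReal.ofReal_prod_of_nonneg fun i _ ↦ by positivity, Finset.prod_mul_distrib,
      Finset.prod_const, Finset.card_univ, Fintype.card_fin, Finset.prod_ite, Finset.prod_const_one,
      one_mul, Finset.prod_const, Finset.filter_ne', Finset.card_erase_of_mem (Finset.mem_univ _),
      Finset.card_univ, Fintype.card_fin]
  rw [measureReal_def]
  refine ENNReal.toReal_le_of_le_ofReal (by positivity) ?_
  calc (volume : Measure E).toSphere {ω | ‖(ω : E) - v‖ ≤ ρ}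
      = d * volume (Ioo (0 : ℝ) 1 • (Subtype.val '' {ω : sphere (0 : E) 1 | ‖(ω : E) - v‖ ≤ ρ})) :=
        Measure.toSphere_apply' _ hcap
    _ ≤ d * volume {y | ∀ i, |b.repr y i| ≤ c i} := by gcongr
    _ = ENNReal.ofReal (d * 2 ^ d * ρ ^ (d - 1)) := by
        rw [b.volume_setOf_forall_abs_repr_le, hbox, mul_assoc,
          ENNReal.ofReal_mul (Nat.cast_nonneg d), ENNReal.ofReal_natCast]

theorem toSphere_real_setOf_norm_sub_inner_lt_le {x : E} (hx : x ≠ 0) {t : ℝ} (ht : 1 ≤ t) :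
    (volume : Measure E).toSphere.real {ω | ‖x‖ - ⟪x, (ω : E)⟫ < t}
      ≤ finrank ℝ E * 2 ^ finrank ℝ E * (2 * t) ^ (finrank ℝ E - 1)
        * ‖x‖ ^ (-((finrank ℝ E : ℝ) - 1) / 2) := by
  set r := ‖x‖
  have hr : 0 < r := norm_pos_iff.2 hx
  have hd : 1 ≤ finrank ℝ E := by
    have : Nontrivial E := ⟨⟨x, 0, hx⟩⟩
    exact finrank_pos
  set v := r⁻¹ • x
  have hv : ‖v‖ = 1 := by simp [v, norm_smul, r, hr.ne']
  have hband : {ω : sphere (0 : E) 1 | r - ⟪x, (ω : E)⟫ < t}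
      ⊆ {ω | ‖(ω : E) - v‖ ≤ √(2 * t / r)} := by
    intro ω hω
    refine le_sqrt_of_sq_le ?_
    have hsq : ‖(ω : E) - v‖ ^ 2 = 2 * (r - ⟪x, (ω : E)⟫) / r := by
      rw [norm_sub_sq_real, norm_eq_of_mem_sphere, hv, inner_smul_right, real_inner_comm]
      field_simp
      ring
    rw [hsq]
    gcongr
    exact hω.le
  calc _ ≤ (volume : Measure E).toSphere.real {ω | ‖(ω : E) - v‖ ≤ √(2 * t / r)} :=
        measureReal_mono hband
    _ ≤ finrank ℝ E * 2 ^ finrank ℝ E * √(2 * t / r) ^ (finrank ℝ E - 1) :=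
        toSphere_real_setOf_norm_sub_le hv (sqrt_nonneg _)
    _ ≤ finrank ℝ E * 2 ^ finrank ℝ E *
          ((2 * t) ^ (finrank ℝ E - 1) * r ^ (-((finrank ℝ E - 1 : ℕ) : ℝ) / 2)) := by
        gcongr
        exact sqrt_div_pow_le (by linarith) hr _
    _ = _ := by rw [Nat.cast_sub hd, Nat.cast_one]; ring

theorem exists_integral_exp_inner_toSphere_le_rpow_neg : ∃ K : ℝ, ∀ x : E, x ≠ 0 →
    ∫ ω, exp ⟪x, (ω : E)⟫ ∂(volume : Measure E).toSphere
      ≤ K * ‖x‖ ^ (-((finrank ℝ E : ℝ) - 1) / 2) * exp ‖x‖ := by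
  set d := finrank ℝ E
  set S := ∑' k : ℕ, exp (-k) * ((k : ℝ) + 1) ^ (d - 1)
  refine ⟨d * 2 ^ d * 2 ^ (d - 1) * S, fun x hx ↦ ?_⟩
  set c := d * 2 ^ d * 2 ^ (d - 1) * ‖x‖ ^ (-((d : ℝ) - 1) / 2)
  have hbands : ∀ k : ℕ, (volume : Measure E).toSphere.real
      {ω | ‖x‖ - ⟪x, (ω : E)⟫ < k + 1} ≤ c * ((k : ℝ) + 1) ^ (d - 1) := fun k ↦ by
    refine (toSphere_real_setOf_norm_sub_inner_lt_le hx (by simp)).trans_eq ?_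
    rw [mul_pow]
    ring
  have hsum : Summable fun k : ℕ ↦ exp (-k) * (c * ((k : ℝ) + 1) ^ (d - 1)) := by
    simpa only [mul_left_comm] using (summable_exp_neg_mul_succ_pow (d - 1)).mul_left c
  calc ∫ ω, exp ⟪x, (ω : E)⟫ ∂(volume : Measure E).toSphere
      = exp ‖x‖ * ∫ ω, exp (-(‖x‖ - ⟪x, (ω : E)⟫)) ∂(volume : Measure E).toSphere := by
        rw [← integral_const_mul]
        congr 1 with ω
        rw [← exp_add, neg_sub, add_sub_cancel]
    _ ≤ exp ‖x‖ * ∑' k : ℕ, exp (-k) * (c * ((k : ℝ) + 1) ^ (d - 1)) := by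
        gcongr
        exact integral_exp_neg_le_tsum (by fun_prop)
          (fun ω ↦ sub_nonneg.2 (inner_le_norm_of_mem_sphere x ω)) hbands hsum
    _ = d * 2 ^ d * 2 ^ (d - 1) * S * ‖x‖ ^ (-((d : ℝ) - 1) / 2) * exp ‖x‖ := by
        simp_rw [mul_left_comm (exp _) c, tsum_mul_left]
        ring

theorem integrable_exp_inner_toSphere (x : E) :
    Integrable (fun ω : sphere (0 : E) 1 ↦ exp ⟪x, (ω : E)⟫) (volume : Measure E).toSphere :=
  .of_bound (by fun_prop) (exp ‖x‖)
    (.of_forall fun ω ↦ by simpa using exp_le_exp.2 (inner_le_norm_of_mem_sphere x ω))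

theorem integral_exp_inner_toSphere_le (x : E) :
    ∫ ω, exp ⟪x, (ω : E)⟫ ∂(volume : Measure E).toSphere
      ≤ (volume : Measure E).toSphere.real univ * exp ‖x‖ := by
  calc _ ≤ ∫ _, exp ‖x‖ ∂(volume : Measure E).toSphere :=
        integral_mono (integrable_exp_inner_toSphere x) (integrable_const _)
          fun ω ↦ exp_le_exp.2 (inner_le_norm_of_mem_sphere x ω)
    _ = _ := by rw [integral_const, smul_eq_mul]

theorem integral_exp_inner_toSphere_pos [Nontrivial E] (x : E) :
    0 < ∫ ω, exp ⟪x, (ω : E)⟫ ∂(volume : Measure E).toSphere :=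
  have : NeZero (volume : Measure E).toSphere := ⟨Measure.toSphere_ne_zero _⟩
  integral_exp_pos (integrable_exp_inner_toSphere x)

theorem exists_integral_exp_inner_toSphere_le_one_add_rpow [Nontrivial E] :
    ∃ C₀ : ℝ, 0 < C₀ ∧ ∀ x : E,
      ∫ ω, exp ⟪x, (ω : E)⟫ ∂(volume : Measure E).toSphere
        ≤ C₀ * (1 + ‖x‖) ^ (-((finrank ℝ E : ℝ) - 1) / 2) * exp ‖x‖ := by
  obtain ⟨K, hK⟩ := exists_integral_exp_inner_toSphere_le_rpow_neg (E := E)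
  set T := (volume : Measure E).toSphere.real univ
  set p := ((finrank ℝ E : ℝ) - 1) / 2
  have hT : 0 < T := by
    have : NeZero (volume : Measure E).toSphere := ⟨Measure.toSphere_ne_zero _⟩
    exact measureReal_univ_pos
  have hp : 0 ≤ p := by
    have : (1 : ℝ) ≤ finrank ℝ E := by exact_mod_cast finrank_pos (R := ℝ) (M := E)
    exact div_nonneg (by linarith) zero_le_two
  refine ⟨2 ^ p * max T K, by positivity, fun x ↦ ?_⟩
  rw [neg_div]
  calc _ ≤ max T K * max 1 ‖x‖ ^ (-p) * exp ‖x‖ := by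
        rcases le_or_gt ‖x‖ 1 with hx | hx
        · rw [max_eq_left hx, one_rpow, mul_one]
          exact (integral_exp_inner_toSphere_le x).trans (by gcongr; exact le_max_left T K)
        · rw [max_eq_right hx.le, ← neg_div]
          refine (hK x (norm_pos_iff.1 (by linarith))).trans ?_
          gcongr
          exact le_max_right T K
    _ ≤ max T K * (2 ^ p * (1 + ‖x‖) ^ (-p)) * exp ‖x‖ := by
        gcongr
        exact max_one_rpow_neg_le hp (norm_nonneg x)
    _ = _ := by ring

end InnerProductSpace

/-- For `n ≥ 2` there exists `C₀ > 0` such that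
`φ(x) = ∫_{S^{n-1}} e^{x·ω} dω` satisfies
`0 < φ(x) ≤ C₀ (1+|x|)^{-(n-1)/2} e^{|x|}` for all `x ∈ ℝⁿ`. -/
theorem stmt7 (n : ℕ) (hn : 2 ≤ n)
    (φ : EuclideanSpace ℝ (Fin n) → ℝ)
    (hφ : ∀ x, φ x = ∫ ω : Metric.sphere (0 : EuclideanSpace ℝ (Fin n)) 1,
        Real.exp (inner ℝ x (ω : EuclideanSpace ℝ (Fin n)))
          ∂((volume : Measure (EuclideanSpace ℝ (Fin n))).toSphere)) :
    ∃ C₀ : ℝ, 0 < C₀ ∧ ∀ x,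
      0 < φ x ∧
      φ x ≤ C₀ * (1 + ‖x‖) ^ (-((n : ℝ) - 1) / 2) * Real.exp ‖x‖ := by
  have : Nonempty (Fin n) := ⟨⟨0, by omega⟩⟩
  obtain ⟨C₀, hC₀, hle⟩ :=
    exists_integral_exp_inner_toSphere_le_one_add_rpow (E := EuclideanSpace ℝ (Fin n))
  rw [finrank_euclideanSpace_fin] at hle
  exact ⟨C₀, hC₀, fun x ↦ ⟨hφ x ▸ integral_exp_inner_toSphere_pos x, hφ x ▸ hle x⟩⟩
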